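/- arXiv:2203.15853 — 2 statements merged into one kernel-verified Lean document; each statement's English description precedes it below -/
import Mathlib

section
/- Consider the single-arm MDP (the 'slow-and-steady' problem) with states {Steady, Brief, End, U-Steady, U-Brief, Pre-Steady}, deterministic and ε-perturbed transitions as specified, rewards r(Steady,1)=α, r(Brief,1)=β, all others 0, discount γ = 1−ε, with 0 < (1 + 1/γ²)α < β < γα/(1−γ). With Lagrangian penalty λ = α, the optimal single-arm value functions satisfy V_λ(U-Steady) = γ(γ²(β−α) − α) and V_λ(U-Brief) = γ²(β−α) − α, so idling is optimal in U-Steady while pulling is optimal in U-Brief. -/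
/-! Write `c = γ²(β − α) − α`; the lower bound on `β` makes `c` positive. Pulling in U-Brief
already guarantees `V(U-Brief) ≥ c > 0`, so idling in U-Steady (worth `γ V(U-Brief) > 0`) beats
paying `α`. Then `V(U-Brief) = max (γ² V(U-Brief)) c`, and since `γ² < 1` the first branch
would force `V(U-Brief) < V(U-Brief)`. -/

theorem eq_of_eq_max_mul_self {a c x : ℝ} (ha : a < 1) (hc : 0 < c)
    (hx : x = max (a * x) c) : x = c := by
  have hxc : c ≤ x := hx ▸ le_max_right _ _
  have hax : a * x < x := by nlinarith
  rcases max_choice (a * x) c with h | h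
  · rw [h] at hx; linarith
  · rwa [h] at hx

theorem eq_of_bellman_idle_swap {γ α c x y : ℝ} (hγ0 : 0 < γ) (hγ1 : γ < 1) (hα : 0 < α)
    (hc : 0 < c) (hx : x = max (γ * y) (-α)) (hy : y = max (γ * x) c) :
    x = γ * y ∧ y = c := by
  have hyc : c ≤ y := hy ▸ le_max_right _ _
  have hx_idle : x = γ * y := by
    rw [hx, max_eq_left]
    nlinarith
  have hy_fix : y = max (γ ^ 2 * y) c := by rw [sq, mul_assoc, ← hx_idle, ← hy]
  exact ⟨hx_idle, eq_of_eq_max_mul_self (by nlinarith) hc hy_fix⟩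

theorem stmt_10_general (α β γ ε VUS VUB : ℝ)
    (hε : ε = 1 - γ) (hγ0 : 7 / 8 < γ) (hγ1 : γ < 1)
    (hα : 0 < (1 + 1 / γ ^ 2) * α) (hβ1 : (1 + 1 / γ ^ 2) * α < β)
    (hUS : VUS = max (γ * VUB) (-α))
    (hUB : VUB = max (γ * VUS) (-α + γ * (1 - ε) * (β - α))) :
    VUS = γ * (γ ^ 2 * (β - α) - α) ∧ VUB = γ ^ 2 * (β - α) - α ∧
    VUS = γ * VUB ∧ VUB = -α + γ * (1 - ε) * (β - α) := by
  have hγ : 0 < γ := by linarith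
  have hpull : -α + γ * (1 - ε) * (β - α) = γ ^ 2 * (β - α) - α := by rw [hε]; ring
  have hα0 : 0 < α := pos_of_mul_pos_right hα (by positivity)
  have hc : 0 < γ ^ 2 * (β - α) - α := by
    have h := mul_lt_mul_of_pos_left hβ1 (pow_pos hγ 2)
    field_simp at h
    linarith
  rw [hpull] at hUB ⊢
  obtain ⟨hidle, hVUB⟩ := eq_of_bellman_idle_swap hγ hγ1 hα0 hc hUS hUB
  exact ⟨hidle.trans (by rw [hVUB]), hVUB, hidle, hVUB⟩

/-- In the slow-and-steady single-arm MDP with Lagrangian penalty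
`λ = α`, the value functions (characterized by their Bellman equations) satisfy
`V(U-Steady) = γ(γ²(β−α)−α)` and `V(U-Brief) = γ²(β−α)−α`; idling attains the
maximum in U-Steady while pulling attains it in U-Brief. -/
theorem stmt_10 (α β γ ε VUS VUB : ℝ)
    (hε : ε = 1 - γ) (hγ0 : 7 / 8 < γ) (hγ1 : γ < 1)
    (hα : 0 < (1 + 1 / γ ^ 2) * α) (hβ1 : (1 + 1 / γ ^ 2) * α < β)
    (hβ2 : β < γ * α / (1 - γ))
    (hUS : VUS = max (γ * VUB) (-α))
    (hUB : VUB = max (γ * VUS) (-α + γ * (1 - ε) * (β - α))) :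
    VUS = γ * (γ ^ 2 * (β - α) - α) ∧ VUB = γ ^ 2 * (β - α) - α ∧
    VUS = γ * VUB ∧ VUB = -α + γ * (1 - ε) * (β - α) :=
  stmt_10_general α β γ ε VUS VUB hε hγ0 hγ1 hα hβ1 hUS hUB
end

section
/- In the slow-and-steady single-arm MDP with Lagrangian penalty λ = 0, the optimal value functions satisfy V_0(U-Steady) = αγ²/(1−γ) and V_0(U-Brief) = αγ³/(1−γ), with pulling optimal in U-Steady and idling optimal in U-Brief. -/
/-! With `ε = 1 - γ` the Bellman system reads `x = max (γ y) S`, `y = max (γ x) B` with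
`S = γ²α/(1-γ)` and `B = γ²β`. Since `x ≥ S`, the condition `β < γα/(1-γ)`, i.e. `B < γ S`,
forces idling in U-Brief (`y = γ x`); then `x = max (γ² x) S`, and `x = γ² x` would give
`x = 0`, so pulling is optimal in U-Steady and `x = S`. -/

theorem eq_and_eq_mul_of_eq_max_of_eq_max {𝕜 : Type*} [Field 𝕜]
    [LinearOrder 𝕜] [IsStrictOrderedRing 𝕜]
    {γ S B x y : 𝕜} (hγ0 : 0 ≤ γ) (hγ1 : γ < 1) (hS : 0 ≤ S) (hB : B ≤ γ * S)
    (hx : x = max (γ * y) S) (hy : y = max (γ * x) B) : x = S ∧ y = γ * x := by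
  have hSx : S ≤ x := hx ▸ le_max_right _ _
  have hy' : y = γ * x := by
    rw [hy, max_eq_left (hB.trans (mul_le_mul_of_nonneg_left hSx hγ0))]
  refine ⟨?_, hy'⟩
  rw [hy', ← mul_assoc] at hx
  rcases le_total (γ * γ * x) S with h | h
  · rwa [max_eq_right h] at hx
  · rw [max_eq_left h] at hx
    have hγγ : γ * γ < 1 := by nlinarith
    nlinarith

theorem stmt_11_general (α β γ ε VUS VUB : ℝ)
    (hε : ε = 1 - γ) (hγ0 : 7 / 8 < γ) (hγ1 : γ < 1)
    (hα : 0 < (1 + 1 / γ ^ 2) * α)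
    (hβ2 : β < γ * α / (1 - γ))
    (hUS : VUS = max (γ * VUB) ((1 - ε) * γ * (α / (1 - γ))))
    (hUB : VUB = max (γ * VUS) (γ * (1 - ε) * β)) :
    VUS = α * γ ^ 2 / (1 - γ) ∧ VUB = α * γ ^ 3 / (1 - γ) ∧
    VUS = (1 - ε) * γ * (α / (1 - γ)) ∧ VUB = γ * VUS := by
  subst hε
  rw [sub_sub_cancel] at hUS hUB ⊢
  have hγ : 0 < γ := by linarith
  have hα0 : 0 < α := pos_of_mul_pos_right hα (by positivity)
  have hB : γ * γ * β ≤ γ * (γ * γ * (α / (1 - γ))) := by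
    have : β ≤ γ * (α / (1 - γ)) := by rw [← mul_div_assoc]; exact hβ2.le
    calc γ * γ * β ≤ γ * γ * (γ * (α / (1 - γ))) := by gcongr
      _ = _ := by ring
  obtain ⟨hVUS, hVUB⟩ :=
    eq_and_eq_mul_of_eq_max_of_eq_max hγ.le hγ1 (by positivity) hB hUS hUB
  refine ⟨?_, ?_, hVUS, hVUB⟩
  · rw [hVUS]; ring
  · rw [hVUB, hVUS]; ring

/-- In the slow-and-steady single-arm MDP with Lagrangian penalty
`λ = 0`, the value functions satisfy `V₀(U-Steady) = αγ²/(1−γ)` and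
`V₀(U-Brief) = αγ³/(1−γ)`; pulling attains the maximum in U-Steady while idling
attains it in U-Brief. -/
theorem stmt_11 (α β γ ε VUS VUB : ℝ)
    (hε : ε = 1 - γ) (hγ0 : 7 / 8 < γ) (hγ1 : γ < 1)
    (hα : 0 < (1 + 1 / γ ^ 2) * α) (hβ1 : (1 + 1 / γ ^ 2) * α < β)
    (hβ2 : β < γ * α / (1 - γ))
    (hUS : VUS = max (γ * VUB) ((1 - ε) * γ * (α / (1 - γ))))
    (hUB : VUB = max (γ * VUS) (γ * (1 - ε) * β)) :
    VUS = α * γ ^ 2 / (1 - γ) ∧ VUB = α * γ ^ 3 / (1 - γ) ∧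
    VUS = (1 - ε) * γ * (α / (1 - γ)) ∧ VUB = γ * VUS :=
  stmt_11_general α β γ ε VUS VUB hε hγ0 hγ1 hα hβ2 hUS hUB
end
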